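/- Let X and Y be real normed spaces with dim X = 1, and let f : X → Y be a surjective map satisfying the phase-isometry condition. Then there exist a surjective linear isometry U : X → Y and a function σ : X → {−1, 1} such that f(x) = σ(x) • U(x) for all x ∈ X; indeed, fixing a unit vector x₀ ∈ X, the map U defined by U(λ • x₀) = λ • f(x₀) is a surjective linear isometry and f(λ • x₀) = ± U(λ • x₀) for every λ ∈ ℝ. -/

import Mathlib

/-- The phase-isometry condition: `{‖f x + f y‖, ‖f x − f y‖} = {‖x + y‖, ‖x − y‖}` as sets. -/
def PhaseIsometry {X Y : Type*} [NormedAddCommGroup X] [NormedAddCommGroup Y]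
    (f : X → Y) : Prop :=
  ∀ x y : X, ({‖f x + f y‖, ‖f x - f y‖} : Set ℝ) = {‖x + y‖, ‖x - y‖}

/-!
In dimension one two vectors of equal norm agree up to sign, and a phase isometry `f` preserves
norms and satisfies `f (-x) = ± f x` (take `y = -x` in the defining identity). Hence `f x = ± f w`
whenever `‖x‖ = ‖w‖`. Given any linear isometry `U` (e.g. `λ x₀ ↦ λ f x₀`), surjectivity of `f`
supplies `w` with `f w = U x`, and `‖w‖ = ‖U x‖ = ‖x‖`, so `f x = ± U x`; this in turn makes `U`
surjective.
-/

section OneDimensional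

variable {X : Type*} [NormedAddCommGroup X] [NormedSpace ℝ X]

theorem eq_or_eq_neg_of_norm_eq_of_finrank_eq_one (hdim : Module.finrank ℝ X = 1) {x y : X}
    (hxy : ‖x‖ = ‖y‖) : x = y ∨ x = -y := by
  rcases eq_or_ne y 0 with rfl | hy
  · exact .inl (norm_eq_zero.mp (hxy.trans norm_zero))
  obtain ⟨c, rfl⟩ := (finrank_eq_one_iff_of_nonzero' y hy).mp hdim x
  rw [norm_smul, Real.norm_eq_abs, mul_eq_right₀ (norm_ne_zero_iff.mpr hy)] at hxy
  rcases abs_eq (zero_le_one' ℝ) |>.mp hxy with rfl | rfl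
  · exact .inl (one_smul ℝ y)
  · exact .inr (neg_one_smul ℝ y)

theorem exists_linearIsometry_apply_eq_of_finrank_eq_one {Y : Type*} [NormedAddCommGroup Y]
    [NormedSpace ℝ Y] (hdim : Module.finrank ℝ X = 1) {x₀ : X} (hx₀ : x₀ ≠ 0) {y₀ : Y}
    (hy₀ : ‖y₀‖ = ‖x₀‖) : ∃ U : X →ₗᵢ[ℝ] Y, U x₀ = y₀ := by
  let b := FiniteDimensional.basisSingleton (Fin 1) hdim x₀ hx₀
  let L : X →ₗ[ℝ] Y := (b.coord 0).smulRight y₀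
  have hL : ∀ c : ℝ, L (c • x₀) = c • y₀ := fun c => by
    have hb : b 0 = x₀ := FiniteDimensional.basisSingleton_apply (Fin 1) hdim x₀ hx₀ 0
    rw [map_smul, LinearMap.smulRight_apply, ← hb, Module.Basis.coord_apply, b.repr_self,
      Finsupp.single_eq_same, one_smul]
  refine ⟨⟨L, fun x => ?_⟩, by simpa using hL 1⟩
  obtain ⟨c, rfl⟩ := (finrank_eq_one_iff_of_nonzero' x₀ hx₀).mp hdim x
  rw [hL, norm_smul, norm_smul, hy₀]

end OneDimensional

namespace PhaseIsometry

variable {X Y : Type*} [NormedAddCommGroup X] [NormedAddCommGroup Y] {f : X → Y}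

theorem map_neg_eq_or (hf : PhaseIsometry f) (x : X) : f (-x) = f x ∨ f (-x) = -f x := by
  have h0 : (0 : ℝ) ∈ ({‖f x + f (-x)‖, ‖f x - f (-x)‖} : Set ℝ) := by
    rw [hf x (-x), add_neg_cancel, norm_zero]
    exact .inl rfl
  rcases h0 with h0 | h0
  · exact .inr (eq_neg_of_add_eq_zero_right (norm_eq_zero.mp h0.symm))
  · exact .inl (sub_eq_zero.mp (norm_eq_zero.mp (Set.mem_singleton_iff.mp h0).symm)).symm

theorem norm_map [NormedSpace ℝ X] [NormedSpace ℝ Y] (hf : PhaseIsometry f) (x : X) :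
    ‖f x‖ = ‖x‖ := by
  have h := hf x x
  simp only [sub_self, norm_zero, ← two_smul ℝ, norm_smul, Real.norm_two] at h
  rcases Set.pair_eq_pair_iff.mp h with ⟨h, -⟩ | ⟨h, h'⟩ <;> linarith

theorem map_eq_or_eq_neg_of_norm_eq [NormedSpace ℝ X] (hdim : Module.finrank ℝ X = 1)
    (hf : PhaseIsometry f) {x w : X} (hxw : ‖x‖ = ‖w‖) : f x = f w ∨ f x = -f w := by
  rcases eq_or_eq_neg_of_norm_eq_of_finrank_eq_one hdim hxw with rfl | rfl
  · exact .inl rfl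
  · exact hf.map_neg_eq_or w

theorem eq_or_eq_neg_of_norm_map_eq [NormedSpace ℝ X] [NormedSpace ℝ Y]
    (hdim : Module.finrank ℝ X = 1) (hf : PhaseIsometry f) (hsurj : Function.Surjective f)
    {g : X → Y} (hg : ∀ x, ‖g x‖ = ‖x‖) (x : X) : f x = g x ∨ f x = -g x := by
  obtain ⟨w, hw⟩ := hsurj (g x)
  rw [← hw]
  exact hf.map_eq_or_eq_neg_of_norm_eq hdim (by rw [← hf.norm_map w, hw, hg])

end PhaseIsometry

theorem LinearMap.surjective_of_forall_eq_or_eq_neg {R M N : Type*} [Ring R] [AddCommGroup M]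
    [AddCommGroup N] [Module R M] [Module R N] {U : M →ₗ[R] N} {f : M → N}
    (hsurj : Function.Surjective f) (hfU : ∀ x, f x = U x ∨ f x = -U x) :
    Function.Surjective U := by
  intro z
  obtain ⟨w, rfl⟩ := hsurj z
  rcases hfU w with h | h
  · exact ⟨w, h.symm⟩
  · exact ⟨-w, by rw [map_neg, h]⟩

theorem phase_isometry_dim_one
    {X Y : Type*} [NormedAddCommGroup X] [NormedSpace ℝ X]
    [NormedAddCommGroup Y] [NormedSpace ℝ Y]
    (hdim : Module.finrank ℝ X = 1)
    (f : X → Y) (hsurj : Function.Surjective f) (hf : PhaseIsometry f) :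
    (∃ U : X →ₗᵢ[ℝ] Y, Function.Surjective U ∧
      ∃ σ : X → ℝ, (∀ x : X, σ x = 1 ∨ σ x = -1) ∧ ∀ x : X, f x = σ x • U x) ∧
    ∀ x₀ : X, ‖x₀‖ = 1 →
      ∃ U : X →ₗᵢ[ℝ] Y, Function.Surjective U ∧
        (∀ lam : ℝ, U (lam • x₀) = lam • f x₀) ∧
        (∀ lam : ℝ, f (lam • x₀) = U (lam • x₀) ∨ f (lam • x₀) = -U (lam • x₀)) := by
  have hpm : ∀ U : X →ₗᵢ[ℝ] Y, ∀ x, f x = U x ∨ f x = -U x := fun U =>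
    hf.eq_or_eq_neg_of_norm_map_eq hdim hsurj U.norm_map
  have hU : ∀ x₀ : X, ‖x₀‖ = 1 →
      ∃ U : X →ₗᵢ[ℝ] Y, Function.Surjective U ∧
        (∀ lam : ℝ, U (lam • x₀) = lam • f x₀) ∧
        (∀ lam : ℝ, f (lam • x₀) = U (lam • x₀) ∨ f (lam • x₀) = -U (lam • x₀)) := by
    intro x₀ hx₀
    obtain ⟨U, hUx₀⟩ := exists_linearIsometry_apply_eq_of_finrank_eq_one hdim
      (norm_ne_zero_iff.mp (hx₀ ▸ one_ne_zero)) (hf.norm_map x₀)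
    exact ⟨U, U.toLinearMap.surjective_of_forall_eq_or_eq_neg hsurj (hpm U),
      fun lam => by rw [U.map_smul, hUx₀], fun lam => hpm U _⟩
  refine ⟨?_, hU⟩
  have : Nontrivial X := Module.nontrivial_of_finrank_eq_succ hdim
  obtain ⟨x₀, hx₀⟩ := exists_norm_eq X zero_le_one
  obtain ⟨U, hUsurj, -⟩ := hU x₀ hx₀
  have hσ : ∀ x, ∃ s : ℝ, (s = 1 ∨ s = -1) ∧ f x = s • U x := fun x =>
    (hpm U x).elim (fun h => ⟨1, .inl rfl, by rw [h, one_smul]⟩)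
      (fun h => ⟨-1, .inr rfl, by rw [h, neg_one_smul]⟩)
  choose σ hσ using hσ
  exact ⟨U, hUsurj, σ, fun x => (hσ x).1, fun x => (hσ x).2⟩
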